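/- arXiv:2401.12394 — 2 statements merged into one kernel-verified Lean document; each statement's English description precedes it below -/
import Mathlib

section
/- Let n ≥ 1, let ζ = exp(2πi/n) ∈ ℂ, let θ ∈ ℝ and t = exp(iθ). Then 2^(n−1) · f_t = T_n − C (cos(n·θ)) in ℝ[X], where T_n is the n-th Chebyshev polynomial of the first kind over ℝ. In particular only the constant term of f_t depends on θ. -/
open Polynomial Finset

/-! With `J u = (u + u⁻¹) / 2` one has `cos w = J (exp (w i))`, and on the unit circle
`Re v = J v`. The identity `J u - J v = (u - v) (u - v⁻¹) / (2u)` splits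
`∏ₖ (J u - J (ζ^k t))` into two products over the `n`-th roots of unity, which collapse to
`u^n - t^n` and `u^n - t⁻ⁿ`; recombining them gives `2^(1-n) (J (u^n) - J (t^n))`, i.e.
`2^(1-n) (cos (n w) - cos (n θ)) = 2^(1-n) (T_n (cos w) - cos (n θ))`. Since `cos` is onto `ℂ`,
the two complexified polynomials agree everywhere. -/

theorem IsPrimitiveRoot.prod_range_sub_pow_mul {R : Type*} [CommRing R] [IsDomain R] {ζ : R}
    {n : ℕ} (hζ : IsPrimitiveRoot ζ n) (hn : 0 < n) (x y : R) :
    ∏ k ∈ range n, (x - ζ ^ k * y) = x ^ n - y ^ n := by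
  simpa [eval_prod] using congr_arg (eval x) (X_pow_sub_C_eq_prod hζ hn rfl).symm

section Field

variable {K : Type*} [Field K]

def joukowski (z : K) : K := (z + z⁻¹) / 2

theorem joukowski_sub_joukowski {a b : K} (ha : a ≠ 0) (hb : b ≠ 0) :
    joukowski a - joukowski b = (2 * a)⁻¹ * ((a - b) * (a - b⁻¹)) := by
  unfold joukowski
  field_simp
  ring

theorem IsPrimitiveRoot.prod_range_joukowski_sub [NeZero (2 : K)] {ζ : K} {n : ℕ}
    (hζ : IsPrimitiveRoot ζ n) (hn : 0 < n) {u v : K} (hu : u ≠ 0) (hv : v ≠ 0) :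
    2 ^ (n - 1) * ∏ k ∈ range n, (joukowski u - joukowski (ζ ^ k * v)) =
      joukowski (u ^ n) - joukowski (v ^ n) := by
  have hζ0 : ζ ≠ 0 := hζ.ne_zero hn.ne'
  have hfactor : ∀ k ∈ range n, joukowski u - joukowski (ζ ^ k * v) =
      (2 * u)⁻¹ * ((u - ζ ^ k * v) * (u - ζ⁻¹ ^ k * v⁻¹)) := fun k _ => by
    rw [joukowski_sub_joukowski hu (by simp [hζ0, hv]), mul_inv (ζ ^ k), inv_pow]
  have hscale : (2 : K) ^ (n - 1) * (2 * u)⁻¹ ^ n = (2 * u ^ n)⁻¹ := by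
    obtain ⟨m, rfl⟩ := Nat.exists_eq_add_of_lt hn
    simp only [zero_add, Nat.add_sub_cancel, inv_pow, mul_pow, pow_succ, mul_inv]
    field_simp
  rw [prod_congr rfl hfactor, prod_mul_distrib, prod_mul_distrib, prod_const, card_range,
    hζ.prod_range_sub_pow_mul hn, hζ.inv.prod_range_sub_pow_mul hn, ← mul_assoc, hscale,
    joukowski_sub_joukowski (pow_ne_zero n hu) (pow_ne_zero n hv), inv_pow]

end Field

namespace Complex

theorem cos_eq_joukowski_exp (w : ℂ) : cos w = joukowski (exp (w * I)) := by
  rw [joukowski, cos, ← exp_neg, neg_mul]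

theorem ofReal_re_eq_joukowski {z : ℂ} (hz : ‖z‖ = 1) : (z.re : ℂ) = joukowski z := by
  rw [joukowski, inv_eq_conj hz, add_conj, ofReal_mul, ofReal_ofNat,
    mul_div_cancel_left₀ _ two_ne_zero]

end Complex

/-- `2^(n-1) * f_t = T_n - cos (n θ)` where `t = exp (i θ)` and `T_n` is the
`n`-th Chebyshev polynomial of the first kind. -/
theorem f_eq_chebyshev (n : ℕ) (hn : 1 ≤ n)
    (ζ : ℂ) (hζ : ζ = Complex.exp (2 * Real.pi * Complex.I / n))
    (θ : ℝ) (t : ℂ) (ht : t = Complex.exp (θ * Complex.I)) :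
    C ((2 : ℝ) ^ (n - 1)) * (∏ k ∈ Finset.range n, (X - C (Complex.re (t * ζ ^ k)))) =
      Polynomial.Chebyshev.T ℝ n - C (Real.cos (n * θ)) := by
  have hprim : IsPrimitiveRoot ζ n := hζ ▸ Complex.isPrimitiveRoot_exp n (by omega)
  have hnorm : ∀ k, ‖ζ ^ k * t‖ = 1 := fun k => by
    rw [norm_mul, norm_pow, hprim.norm'_eq_one (by omega), ht, Complex.norm_exp_ofReal_mul_I,
      one_pow, one_mul]
  apply map_injective (algebraMap ℝ ℂ) (algebraMap ℝ ℂ).injective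
  refine Polynomial.funext fun z => ?_
  obtain ⟨w, rfl⟩ := Complex.cos_surjective z
  simp only [Polynomial.map_mul, Polynomial.map_prod, Polynomial.map_sub, map_X, map_C,
    Chebyshev.map_T, eval_mul, eval_prod, eval_sub, eval_X, eval_C, Chebyshev.T_complex_cos,
    Complex.coe_algebraMap]
  have hcos_nw : Complex.cos (n * w) = joukowski (Complex.exp (w * Complex.I) ^ n) := by
    rw [Complex.cos_eq_joukowski_exp, ← Complex.exp_nat_mul, mul_assoc]
  have hcos_nθ : Complex.cos (n * θ) = joukowski (t ^ n) := by
    rw [Complex.cos_eq_joukowski_exp, ht, ← Complex.exp_nat_mul, mul_assoc]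
  simp_rw [mul_comm t, Complex.ofReal_re_eq_joukowski (hnorm _)]
  push_cast
  rw [hcos_nw, hcos_nθ, Complex.cos_eq_joukowski_exp]
  exact hprim.prod_range_joukowski_sub (by omega) (Complex.exp_ne_zero _)
    (ht ▸ Complex.exp_ne_zero _)
end

section
/- Let n ≥ 1, let ζ = exp(2πi/n) ∈ ℂ, and let t, s ∈ ℂ with |t| = |s| = 1. Then the polynomials f_t and f_s differ by a real constant: f_t − f_s = C ((f_t).coeff 0 − (f_s).coeff 0). Equivalently, for all x ∈ ℝ, (f_t).eval x − (f_s).eval x is independent of x. -/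
open Polynomial Finset

/-!
Writing a real `x` as `(a + a⁻¹) / 2` with `a ∈ ℂ` and each vertex `u = t ζ ^ k` of the polygon
as `Re u = (u + u⁻¹) / 2`, every factor of `f_t(x)` becomes `(a - u) (a⁻¹ - u) / (-2u)`. Since
`∏ₖ (z - t ζ ^ k) = z ^ n - t ^ n`, this gives
`2 ^ n f_t(x) = a ^ n + a⁻¹ ^ n - (t ^ n + t⁻¹ ^ n)`: only the last term depends on `t`, so
`f_t - f_s` has constant values and hence is a constant polynomial.
-/

theorem IsPrimitiveRoot.prod_sub_mul_pow {R : Type*} [CommRing R] [IsDomain R] {ζ : R} {n : ℕ}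
    (hζ : IsPrimitiveRoot ζ n) (hn : 0 < n) (z t : R) :
    ∏ k ∈ range n, (z - t * ζ ^ k) = z ^ n - t ^ n := by
  have h := congrArg (eval z) (X_pow_sub_C_eq_prod hζ (α := t) hn rfl)
  simpa [eval_prod, mul_comm] using h.symm

section Field

variable {K : Type*} [Field K] {ζ : K} {n : ℕ}

theorem add_inv_sub_add_inv_mul_neg {a u : K} (ha : a ≠ 0) (hu : u ≠ 0) :
    (a + a⁻¹ - (u + u⁻¹)) * -u = (a - u) * (a⁻¹ - u) := by
  field_simp
  ring

theorem IsPrimitiveRoot.prod_add_inv_sub_add_inv (hζ : IsPrimitiveRoot ζ n) (hn : 0 < n)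
    {a t : K} (ha : a ≠ 0) (ht : t ≠ 0) :
    ∏ k ∈ range n, (a + a⁻¹ - (t * ζ ^ k + (t * ζ ^ k)⁻¹)) =
      a ^ n + a⁻¹ ^ n - (t ^ n + t⁻¹ ^ n) := by
  have hζ0 : ζ ≠ 0 := hζ.ne_zero hn.ne'
  have hprod_neg : ∏ k ∈ range n, -(t * ζ ^ k) = -t ^ n := by
    simpa [zero_pow hn.ne'] using hζ.prod_sub_mul_pow hn 0 t
  have hprod_mul_neg : (∏ k ∈ range n, (a + a⁻¹ - (t * ζ ^ k + (t * ζ ^ k)⁻¹))) * -t ^ n =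
      (a ^ n - t ^ n) * (a⁻¹ ^ n - t ^ n) := by
    rw [← hprod_neg, ← prod_mul_distrib, ← hζ.prod_sub_mul_pow hn a t,
      ← hζ.prod_sub_mul_pow hn a⁻¹ t, ← prod_mul_distrib]
    exact prod_congr rfl fun k _ ↦
      add_inv_sub_add_inv_mul_neg ha (mul_ne_zero ht (pow_ne_zero k hζ0))
  have ha_inv : a ^ n * a⁻¹ ^ n = 1 := by rw [inv_pow, mul_inv_cancel₀ (pow_ne_zero n ha)]
  have ht_inv : t ^ n * t⁻¹ ^ n = 1 := by rw [inv_pow, mul_inv_cancel₀ (pow_ne_zero n ht)]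
  refine mul_right_cancel₀ (neg_ne_zero.2 (pow_ne_zero n ht)) (hprod_mul_neg.trans ?_)
  linear_combination ha_inv - ht_inv

end Field

theorem Complex.ofReal_re_eq_add_inv_div_two {u : ℂ} (hu : ‖u‖ = 1) :
    (u.re : ℂ) = (u + u⁻¹) / 2 := by
  rw [Complex.inv_eq_conj hu, Complex.re_eq_add_conj]

theorem Complex.exists_add_inv_eq (z : ℂ) : ∃ a : ℂ, a ≠ 0 ∧ a + a⁻¹ = z := by
  obtain ⟨e, he⟩ := IsAlgClosed.exists_eq_mul_self (z ^ 2 - 4)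
  have hmul : (z + e) / 2 * (z - (z + e) / 2) = 1 := by linear_combination he / 4
  exact ⟨(z + e) / 2, left_ne_zero_of_mul_eq_one hmul, by
    rw [inv_eq_of_mul_eq_one_right hmul]; ring⟩

theorem Polynomial.eq_C_coeff_zero_of_forall_eval_eq {R : Type*} [CommRing R] [IsDomain R]
    [Infinite R] {p : R[X]} {c : R} (h : ∀ x, p.eval x = c) : p = C (p.coeff 0) := by
  have hp : p = C c := Polynomial.funext fun x ↦ by rw [h, eval_C]
  rw [hp, coeff_C_zero]

theorem IsPrimitiveRoot.two_pow_mul_eval_prod_X_sub_re {ζ : ℂ} {n : ℕ}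
    (hζ : IsPrimitiveRoot ζ n) (hn : 0 < n) {t a : ℂ} (ht : ‖t‖ = 1) (ha : a ≠ 0) {x : ℝ}
    (hx : a + a⁻¹ = 2 * x) :
    2 ^ n * (((∏ k ∈ range n, (X - C (t * ζ ^ k).re)).eval x : ℝ) : ℂ) =
      a ^ n + a⁻¹ ^ n - (t ^ n + t⁻¹ ^ n) := by
  have hζ1 : ‖ζ‖ = 1 := hζ.norm'_eq_one hn.ne'
  rw [← hζ.prod_add_inv_sub_add_inv hn ha (norm_ne_zero_iff.1 (ht.trans_ne one_ne_zero)),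
    eval_prod, Complex.ofReal_prod, ← card_range n, ← prod_const, card_range, ← prod_mul_distrib]
  refine prod_congr rfl fun k _ ↦ ?_
  have hu : ‖t * ζ ^ k‖ = 1 := by rw [norm_mul, norm_pow, ht, hζ1, one_pow, one_mul]
  rw [eval_sub, eval_X, eval_C, Complex.ofReal_sub, Complex.ofReal_re_eq_add_inv_div_two hu, hx]
  ring

/-- The polynomials `f_t` and `f_s` differ only by a real constant, namely the
difference of their constant terms. -/
theorem f_sub_f_eq_const (n : ℕ) (hn : 1 ≤ n)
    (ζ : ℂ) (hζ : ζ = Complex.exp (2 * Real.pi * Complex.I / n))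
    (t s : ℂ) (ht : ‖t‖ = 1) (hs : ‖s‖ = 1) :
    (∏ k ∈ Finset.range n, (X - C (Complex.re (t * ζ ^ k)))) -
        (∏ k ∈ Finset.range n, (X - C (Complex.re (s * ζ ^ k)))) =
      C ((∏ k ∈ Finset.range n, (X - C (Complex.re (t * ζ ^ k)))).coeff 0 -
          (∏ k ∈ Finset.range n, (X - C (Complex.re (s * ζ ^ k)))).coeff 0) := by
  have hprim : IsPrimitiveRoot ζ n := hζ ▸ Complex.isPrimitiveRoot_exp n (by omega)
  have hdiff : ∀ x : ℝ, 2 ^ n * (((∏ k ∈ range n, (X - C (t * ζ ^ k).re) -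
      ∏ k ∈ range n, (X - C (s * ζ ^ k).re)).eval x : ℝ) : ℂ) = s ^ n + s⁻¹ ^ n - (t ^ n + t⁻¹ ^ n) := by
    intro x
    obtain ⟨a, ha, hx⟩ := Complex.exists_add_inv_eq (2 * x)
    rw [eval_sub, Complex.ofReal_sub, mul_sub, hprim.two_pow_mul_eval_prod_X_sub_re hn ht ha hx,
      hprim.two_pow_mul_eval_prod_X_sub_re hn hs ha hx]
    ring
  rw [← coeff_sub]
  refine eq_C_coeff_zero_of_forall_eval_eq fun x ↦ Complex.ofReal_injective <|
    mul_left_cancel₀ (pow_ne_zero n two_ne_zero) ((hdiff x).trans (hdiff 0).symm)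
end
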